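/- Suppose the aggregate closed-loop adaptive system satisfies, for every i ∈ {1,…,N} and all t ≥ 0, x_i'(t) = A_c x_i(t) − Σ_{j=1}^N L_{ij}(t)·(B (F x_j(t))), where the entries of L(t) ∈ ℝ^{N×N} are differentiable and evolve by L_{ij}'(t) = ⟨x_i(t), B (F x_j(t))⟩ − σ L_{ij}(t) with σ > 0. Then W(t) := Σ_{i=1}^N ‖x_i(t)‖² + Σ_{i,j=1}^N L_{ij}(t)² is nonincreasing on [0,∞); it satisfies the integral inequality W(t) + κ ∫₀^t Σ_{i=1}^N ‖x_i(τ)‖² dτ + 2σ ∫₀^t Σ_{i,j=1}^N L_{ij}(τ)² dτ ≤ W(0) for all t ≥ 0; and W(t) ≤ e^{−min{κ,2σ} t} W(0), so that lim_{t→∞} W(t) = 0. -/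

import Mathlib

open scoped RealInnerProductSpace
open Filter Set

/-! Differentiating `W` along trajectories, the adaptation law for `L` is exactly what makes the
coupling terms `L_ij ⟪x_i, B F x_j⟫` cancel, leaving
`W' = Σ_i 2⟪A_c x_i, x_i⟫ - 2σ Σ_ij L_ij² ≤ -κ Σ_i ‖x_i‖² - 2σ Σ_ij L_ij² ≤ -min(κ, 2σ) W`.
Integrating the middle inequality gives the integral bound, and Grönwall's inequality applied to
the last one gives the exponential decay. -/

theorem le_exp_mul_mul_of_hasDerivAt_le_mul {V V' : ℝ → ℝ} {c : ℝ}
    (hV : ∀ t, 0 ≤ t → HasDerivAt V (V' t) t) (hV' : ∀ t, 0 ≤ t → V' t ≤ c * V t)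
    {t : ℝ} (ht : 0 ≤ t) : V t ≤ Real.exp (c * t) * V 0 := by
  have := le_gronwallBound_of_liminf_deriv_right_le (f' := V') (ε := 0)
    (fun s hs => (hV s hs.1).continuousAt.continuousWithinAt)
    (fun s hs r hr => (hV s hs.1).hasDerivWithinAt.liminf_right_slope_le hr)
    le_rfl (fun s hs => by simpa using hV' s hs.1) t ⟨ht, le_rfl⟩
  simpa [gronwallBound_ε0, mul_comm] using this

theorem tendsto_zero_of_le_exp_neg_mul {V : ℝ → ℝ} {m : ℝ} (hm : 0 < m) (hV0 : ∀ t, 0 ≤ V t)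
    (hV : ∀ t, 0 ≤ t → V t ≤ Real.exp (-m * t) * V 0) : Tendsto V atTop (nhds 0) := by
  have hexp : Tendsto (fun t => Real.exp (-m * t) * V 0) atTop (nhds 0) := by
    simpa using (Real.tendsto_exp_atBot.comp
      (tendsto_id.const_mul_atTop_of_neg (neg_neg_of_pos hm))).mul_const (V 0)
  exact tendsto_of_tendsto_of_tendsto_of_le_of_le' tendsto_const_nhds hexp
    (Eventually.of_forall hV0) (eventually_ge_atTop 0 |>.mono hV)

theorem add_integral_le_of_hasDerivAt_le_neg {V V' φ : ℝ → ℝ} {t : ℝ} (ht : 0 ≤ t)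
    (hV : ∀ s ∈ Icc 0 t, HasDerivAt V (V' s) s) (hφ : ContinuousOn φ (Icc 0 t))
    (hV' : ∀ s ∈ Icc 0 t, V' s ≤ -φ s) : V t + ∫ s in (0:ℝ)..t, φ s ≤ V 0 := by
  have := intervalIntegral.sub_le_integral_of_hasDeriv_right_of_le ht
    (fun s hs => (hV s hs).continuousAt.continuousWithinAt)
    (fun s hs => (hV s (Ioo_subset_Icc_self hs)).hasDerivWithinAt)
    hφ.neg.integrableOn_Icc (fun s hs => hV' s (Ioo_subset_Icc_self hs))
  simp only [Pi.neg_apply, intervalIntegral.integral_neg] at this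
  linarith

section Lyapunov

variable {H ι : Type*} [NormedAddCommGroup H] [Fintype ι]

def lyapunov (x : ι → ℝ → H) (L : ℝ → Matrix ι ι ℝ) (t : ℝ) : ℝ :=
  ∑ i, ‖x i t‖ ^ 2 + ∑ i, ∑ j, L t i j ^ 2

theorem lyapunov_nonneg (x : ι → ℝ → H) (L : ℝ → Matrix ι ι ℝ) (t : ℝ) :
    0 ≤ lyapunov x L t := by
  unfold lyapunov; positivity

theorem min_mul_lyapunov_le (x : ι → ℝ → H) (L : ℝ → Matrix ι ι ℝ) (κ c t : ℝ) :
    min κ c * lyapunov x L t ≤ κ * ∑ i, ‖x i t‖ ^ 2 + c * ∑ i, ∑ j, L t i j ^ 2 := by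
  have hx : 0 ≤ ∑ i, ‖x i t‖ ^ 2 := by positivity
  have hL : 0 ≤ ∑ i, ∑ j, L t i j ^ 2 := by positivity
  rw [lyapunov, mul_add]
  gcongr
  exacts [min_le_left κ c, min_le_right κ c]

variable [InnerProductSpace ℝ H]

theorem sum_two_mul_inner_le_of_dissipative {A : H →L[ℝ] H} {κ : ℝ}
    (hA : ∀ φ : H, 2 * ⟪A φ, φ⟫ ≤ -κ * ‖φ‖ ^ 2) (v : ι → H) :
    ∑ i, 2 * ⟪v i, A (v i)⟫ ≤ -κ * ∑ i, ‖v i‖ ^ 2 := by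
  simpa only [real_inner_comm (v _), Finset.mul_sum] using
    Finset.sum_le_sum fun i (_ : i ∈ Finset.univ) => hA (v i)

theorem hasDerivAt_lyapunov {x : ι → ℝ → H} {L : ℝ → Matrix ι ι ℝ} {a g : ι → H} {σ t : ℝ}
    (hx : ∀ i, HasDerivAt (x i) (a i - ∑ j, L t i j • g j) t)
    (hL : ∀ i j, HasDerivAt (fun s => L s i j) (⟪x i t, g j⟫ - σ * L t i j) t) :
    HasDerivAt (lyapunov x L)
      (∑ i, 2 * ⟪x i t, a i⟫ - 2 * σ * ∑ i, ∑ j, L t i j ^ 2) t := by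
  refine ((HasDerivAt.fun_sum (u := Finset.univ) fun i _ => (hx i).norm_sq).fun_add
    (HasDerivAt.fun_sum (u := Finset.univ) fun i _ =>
      HasDerivAt.fun_sum (u := Finset.univ) fun j _ => (hL i j).fun_pow 2)).congr_deriv ?_
  simp only [inner_sub_right, inner_sum, real_inner_smul_right, Finset.mul_sum, mul_sub,
    Finset.sum_sub_distrib]
  push_cast
  simp only [pow_one, mul_assoc]
  ring_nf
  simp only [mul_comm σ]

end Lyapunov

theorem stmt4_general
    {H U : Type*} [NormedAddCommGroup H] [InnerProductSpace ℝ H]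
    [NormedAddCommGroup U] [InnerProductSpace ℝ U]
    (Ac : H →L[ℝ] H) (B : U →L[ℝ] H) (F : H →L[ℝ] U)
    (κ σ : ℝ) (hκ : 0 < κ) (hσ : 0 < σ)
    (hdiss : ∀ φ : H, 2 * ⟪Ac φ, φ⟫ ≤ -κ * ‖φ‖ ^ 2)
    (N : ℕ) (x : Fin N → ℝ → H)
    (L : ℝ → Matrix (Fin N) (Fin N) ℝ)
    (hx : ∀ i, ∀ t : ℝ, 0 ≤ t →
      HasDerivAt (x i)
        (Ac (x i t) - ∑ j, L t i j • B (F (x j t))) t)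
    (hL : ∀ i j, ∀ t : ℝ, 0 ≤ t →
      HasDerivAt (fun s => L s i j)
        (⟪x i t, B (F (x j t))⟫ - σ * L t i j) t)
    (W : ℝ → ℝ)
    (hW : ∀ t, W t = ∑ i, ‖x i t‖ ^ 2 + ∑ i, ∑ j, (L t i j) ^ 2) :
    AntitoneOn W (Set.Ici 0) ∧
    (∀ t : ℝ, 0 ≤ t →
      W t + κ * (∫ τ in (0:ℝ)..t, ∑ i, ‖x i τ‖ ^ 2)
          + 2 * σ * (∫ τ in (0:ℝ)..t, ∑ i, ∑ j, (L τ i j) ^ 2) ≤ W 0) ∧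
    (∀ t : ℝ, 0 ≤ t → W t ≤ Real.exp (-(min κ (2 * σ)) * t) * W 0) ∧
    Tendsto W atTop (nhds 0) := by
  obtain rfl : W = lyapunov x L := funext hW
  set m := min κ (2 * σ)
  set A : ℝ → ℝ := fun t => ∑ i, ‖x i t‖ ^ 2
  set Q : ℝ → ℝ := fun t => ∑ i, ∑ j, L t i j ^ 2
  set D : ℝ → ℝ := fun t => ∑ i, 2 * ⟪x i t, Ac (x i t)⟫ - 2 * σ * Q t
  have hderiv : ∀ t, 0 ≤ t → HasDerivAt (lyapunov x L) (D t) t :=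
    fun t ht => hasDerivAt_lyapunov (hx · t ht) (hL · · t ht)
  have hdissip : ∀ t, D t ≤ -(κ * A t + 2 * σ * Q t) := fun t => by
    linarith [sum_two_mul_inner_le_of_dissipative hdiss (x · t)]
  have hdecay : ∀ t, D t ≤ -m * lyapunov x L t := fun t => by
    linarith [hdissip t, min_mul_lyapunov_le x L κ (2 * σ) t]
  have hm : 0 < m := lt_min hκ (by positivity)
  have hexp : ∀ t, 0 ≤ t → lyapunov x L t ≤ Real.exp (-m * t) * lyapunov x L 0 :=
    fun t => le_exp_mul_mul_of_hasDerivAt_le_mul hderiv fun s _ => hdecay s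
  refine ⟨?_, fun t ht => ?_, hexp, tendsto_zero_of_le_exp_neg_mul hm (lyapunov_nonneg x L) hexp⟩
  · refine antitoneOn_of_hasDerivWithinAt_nonpos (convex_Ici 0)
      (fun t ht => (hderiv t ht).continuousAt.continuousWithinAt)
      (fun t ht => (hderiv t (interior_subset ht)).hasDerivWithinAt) fun t _ => ?_
    exact (hdecay t).trans
      (mul_nonpos_of_nonpos_of_nonneg (neg_nonpos.2 hm.le) (lyapunov_nonneg x L t))
  · have hxc : ∀ i, ContinuousOn (x i) (Icc 0 t) :=
      fun i s hs => (hx i s hs.1).continuousAt.continuousWithinAt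
    have hLc : ∀ i j, ContinuousOn (fun s => L s i j) (Icc 0 t) :=
      fun i j s hs => (hL i j s hs.1).continuousAt.continuousWithinAt
    have hAc : ContinuousOn A (Icc 0 t) := by fun_prop
    have hQc : ContinuousOn Q (Icc 0 t) := by fun_prop
    have := add_integral_le_of_hasDerivAt_le_neg ht (fun s hs => hderiv s hs.1)
      (by fun_prop) (fun s _ => hdissip s)
    rwa [intervalIntegral.integral_add ((hAc.intervalIntegrable_of_Icc ht).const_mul κ)
      ((hQc.intervalIntegrable_of_Icc ht).const_mul (2 * σ)), intervalIntegral.integral_const_mul,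
      intervalIntegral.integral_const_mul, ← add_assoc] at this

/-- the aggregate Lyapunov function
`W(t) = Σ_i ‖x_i(t)‖² + Σ_{i,j} L_{ij}(t)²` is nonincreasing on `[0,∞)`,
satisfies the integral inequality
`W(t) + κ ∫₀ᵗ Σ‖x_i‖² + 2σ ∫₀ᵗ Σ L_{ij}² ≤ W(0)`, decays exponentially with
rate `min{κ, 2σ}`, and converges to zero. -/
theorem stmt4
    {H U : Type*} [NormedAddCommGroup H] [InnerProductSpace ℝ H] [CompleteSpace H]
    [NormedAddCommGroup U] [InnerProductSpace ℝ U] [CompleteSpace U]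
    (Ac : H →L[ℝ] H) (B : U →L[ℝ] H) (F : H →L[ℝ] U)
    (κ σ : ℝ) (hκ : 0 < κ) (hσ : 0 < σ)
    (hdiss : ∀ φ : H, 2 * ⟪Ac φ, φ⟫ ≤ -κ * ‖φ‖ ^ 2)
    (N : ℕ) (x : Fin N → ℝ → H)
    (L : ℝ → Matrix (Fin N) (Fin N) ℝ)
    (hx : ∀ i, ∀ t : ℝ, 0 ≤ t →
      HasDerivAt (x i)
        (Ac (x i t) - ∑ j, L t i j • B (F (x j t))) t)
    (hL : ∀ i j, ∀ t : ℝ, 0 ≤ t →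
      HasDerivAt (fun s => L s i j)
        (⟪x i t, B (F (x j t))⟫ - σ * L t i j) t)
    (W : ℝ → ℝ)
    (hW : ∀ t, W t = ∑ i, ‖x i t‖ ^ 2 + ∑ i, ∑ j, (L t i j) ^ 2) :
    AntitoneOn W (Set.Ici 0) ∧
    (∀ t : ℝ, 0 ≤ t →
      W t + κ * (∫ τ in (0:ℝ)..t, ∑ i, ‖x i τ‖ ^ 2)
          + 2 * σ * (∫ τ in (0:ℝ)..t, ∑ i, ∑ j, (L τ i j) ^ 2) ≤ W 0) ∧
    (∀ t : ℝ, 0 ≤ t → W t ≤ Real.exp (-(min κ (2 * σ)) * t) * W 0) ∧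
    Tendsto W atTop (nhds 0) :=
  stmt4_general Ac B F κ σ hκ hσ hdiss N x L hx hL W hW
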